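/- Let D be a linearly connected digraph with exactly two strong components D_1 and D_2, both nontrivial, and suppose the sequence {C(D^m)}_{m≥1} converges to a graph G. Then every connected component of G is a complete graph (i.e., any two distinct vertices lying in the same connected component of G are adjacent in G) if and only if κ_2 divides κ_1 and, for all (i, j), (i', j') ∈ I(D_{1,2}), one has red(i) − j = red(i') − j' in ZMod κ_2, where red denotes the natural reduction homomorphism ZMod κ_1 → ZMod κ_2 (well defined since κ_2 divides κ_1). -/

import Mathlib

/-- A digraph: a finite vertex type with an irreflexive arc relation (no loops). -/
structure Digraph' (V : Type*) where
  Adj : V → V → Prop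
  irrefl : ∀ v, ¬ Adj v v

namespace Digraph'

variable {V : Type*}

/-- There is a directed walk of length `m` from `x` to `y` in `D`;
i.e. `y` is an `m`-step prey of `x`. -/
def HasWalk (D : Digraph' V) (m : ℕ) (x y : V) : Prop :=
  ∃ f : ℕ → V, f 0 = x ∧ f m = y ∧ ∀ t, t < m → D.Adj (f t) (f (t + 1))

/-- There is a directed walk of length `m` from `x` to `y` staying inside `S`. -/
def HasWalkIn (D : Digraph' V) (S : Set V) (m : ℕ) (x y : V) : Prop :=
  ∃ f : ℕ → V, f 0 = x ∧ f m = y ∧ (∀ t, t ≤ m → f t ∈ S) ∧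
    ∀ t, t < m → D.Adj (f t) (f (t + 1))

/-- The `m`-step competition graph `C(D^m)` of `D`. -/
def compGraph (D : Digraph' V) (m : ℕ) : SimpleGraph V where
  Adj u v := u ≠ v ∧ ∃ z, D.HasWalk m u z ∧ D.HasWalk m v z
  symm := by
    constructor
    rintro u v ⟨hne, z, h1, h2⟩
    exact ⟨hne.symm, z, h2, h1⟩
  loopless := ⟨fun v h => h.1 rfl⟩

/-- The sequence `{C(D^m)}_{m ≥ 1}` converges. -/
def CompConverges (D : Digraph' V) : Prop :=
  ∃ N : ℕ, 1 ≤ N ∧ ∀ m, N ≤ m → D.compGraph m = D.compGraph N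

/-- The sequence `{C(D^m)}_{m ≥ 1}` converges to the graph `G`. -/
def CompConvergesTo (D : Digraph' V) (G : SimpleGraph V) : Prop :=
  ∃ N : ℕ, 1 ≤ N ∧ ∀ m, N ≤ m → D.compGraph m = G

/-- `D` is linearly connected with strong components `Vset 1, …, Vset η`. -/
structure IsLinConn (D : Digraph' V) (η : ℕ) (Vset : ℕ → Set V) : Prop where
  nonempty : ∀ i, 1 ≤ i → i ≤ η → (Vset i).Nonempty
  cover : ∀ v : V, ∃ i, 1 ≤ i ∧ i ≤ η ∧ v ∈ Vset i
  disjoint' : ∀ i j, 1 ≤ i → i ≤ η → 1 ≤ j → j ≤ η →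
      ∀ v : V, v ∈ Vset i → v ∈ Vset j → i = j
  strong : ∀ i, 1 ≤ i → i ≤ η → ∀ x ∈ Vset i, ∀ y ∈ Vset i,
      ∃ m, D.HasWalkIn (Vset i) m x y
  arcs : ∀ x y : V, D.Adj x y → ∃ i, 1 ≤ i ∧
      ((i ≤ η ∧ x ∈ Vset i ∧ y ∈ Vset i) ∨
       (i + 1 ≤ η ∧ x ∈ Vset i ∧ y ∈ Vset (i + 1)))
  linked : ∀ i, 1 ≤ i → i + 1 ≤ η → ∃ x ∈ Vset i, ∃ y ∈ Vset (i + 1), D.Adj x y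

/-- A component with vertex set `S` is trivial if `S` is a singleton. -/
def IsTrivialComp (S : Set V) : Prop := ∃ v : V, S = {v}

/-- `κ` is the index of imprimitivity of the (strong) component with vertex set `S`:
the gcd of the lengths of all closed directed walks inside `S`. -/
def IsImprimIndex (D : Digraph' V) (S : Set V) (κ : ℕ) : Prop :=
  (∀ (x : V) (m : ℕ), x ∈ S → 0 < m → D.HasWalkIn S m x x → κ ∣ m) ∧
  ∀ d : ℕ, (∀ (x : V) (m : ℕ), x ∈ S → 0 < m → D.HasWalkIn S m x x → d ∣ m) → d ∣ κ

/-- `u` is an imprimitivity labelling on `S`: along any arc inside `S` the label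
increases by one.  Its fibers are the sets of imprimitivity. -/
def IsImprimLabelling (D : Digraph' V) (S : Set V) {κ : ℕ} (u : V → ZMod κ) : Prop :=
  ∀ x ∈ S, ∀ y ∈ S, D.Adj x y → u y = u x + 1

/-- `(k, l) ∈ I(D_{p,p+1})`: some arc goes from a vertex of `U_k^{(p)}` to a vertex of
`U_l^{(p+1)}`. -/
def InI (D : Digraph' V) (Vset : ℕ → Set V) {κ : ℕ → ℕ}
    (u : ∀ i : ℕ, V → ZMod (κ i)) (p : ℕ) (k : ZMod (κ p)) (l : ZMod (κ (p + 1))) : Prop :=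
  ∃ x ∈ Vset p, ∃ y ∈ Vset (p + 1), D.Adj x y ∧ u p x = k ∧ u (p + 1) y = l

/-- `(i, j)` is an edge of the bipartite graph `B_{p,p+1}`. -/
def BAdj (D : Digraph' V) (Vset : ℕ → Set V) {κ : ℕ → ℕ}
    (u : ∀ i : ℕ, V → ZMod (κ i)) (p : ℕ) (i : ZMod (κ p)) (j : ZMod (κ (p + 1))) : Prop :=
  ∃ (k : ZMod (κ p)) (l : ZMod (κ (p + 1))) (a : ℤ),
    InI D Vset u p k l ∧ i = k + 1 + (a : ZMod (κ p)) ∧ j = l + (a : ZMod (κ (p + 1)))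

/-- The competition skeleton graph (CS-graph) `PT_D^{(η)}`: vertices are pairs `⟨r, i⟩`
with `i ∈ ZMod (κ r)` (only `1 ≤ r ≤ η` carries edges); `⟨p, i⟩` and `⟨p+1, j⟩` are
adjacent exactly when `i` and `j` are adjacent in `B_{p,p+1}`. -/
def csGraph (D : Digraph' V) (Vset : ℕ → Set V) {κ : ℕ → ℕ}
    (u : ∀ i : ℕ, V → ZMod (κ i)) (η : ℕ) : SimpleGraph ((r : ℕ) × ZMod (κ r)) where
  Adj a b := ∃ p, 1 ≤ p ∧ p + 1 ≤ η ∧ ∃ (i : ZMod (κ p)) (j : ZMod (κ (p + 1))),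
    BAdj D Vset u p i j ∧
    ((a = ⟨p, i⟩ ∧ b = ⟨p + 1, j⟩) ∨ (a = ⟨p + 1, j⟩ ∧ b = ⟨p, i⟩))
  symm := by
    constructor
    rintro a b ⟨p, h1, h2, i, j, hB, hab⟩
    exact ⟨p, h1, h2, i, j, hB,
      hab.elim (fun h => Or.inr ⟨h.2, h.1⟩) (fun h => Or.inl ⟨h.2, h.1⟩)⟩
  loopless := by
    constructor
    rintro a ⟨p, _, _, i, j, _, hab⟩
    rcases hab with ⟨ha, hb⟩ | ⟨ha, hb⟩
    · have h : p = p + 1 := congrArg Sigma.fst (ha.symm.trans hb)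
      omega
    · have h : p + 1 = p := congrArg Sigma.fst (ha.symm.trans hb)
      omega

end Digraph'

/-! If `G` has complete components, then for every vertex `x` the quantity `u₂ q - s`, for a
walk of length `s` from `x` to a vertex `q` of the terminal component `D₂`, does not depend on
the walk: for `x ∉ D₂`, `x` is adjacent in `G` to every vertex of `D₂` with label `u₂ q - s`,
and two such neighbours are adjacent, hence equally labelled. So completeness amounts to a
labelling `φ : V → ZMod κ₂` of the whole digraph extending `u₂`; conversely such a labelling is
constant on the edges of every `C(D^m)`, and vertices with equal `φ`-labels reach, for all large
`m`, a common vertex of `D₂`, because walks of every large length in the right residue class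
exist inside `D₂`. Finally, a labelling mod `κ₂` of `D₁` forces `κ₂ ∣ κ₁`, and on `D₁` it
differs from the reduction of `u₁` by a constant; the arcs from `D₁` to `D₂` turn that constant
into the condition on `I(D_{1,2})`. -/

open Filter Set

namespace Digraph'

variable {V : Type*} {D : Digraph' V} {S : Set V} {m n κ : ℕ} {x y z : V}

def IsStronglyConnectedOn (D : Digraph' V) (S : Set V) : Prop :=
  ∀ x ∈ S, ∀ y ∈ S, ∃ m, D.HasWalkIn S m x y

lemma HasWalkIn.hasWalk (h : D.HasWalkIn S m x y) : D.HasWalk m x y :=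
  let ⟨f, h0, hm, _, hf⟩ := h
  ⟨f, h0, hm, hf⟩

lemma hasWalkIn_univ_iff : D.HasWalkIn univ m x y ↔ D.HasWalk m x y :=
  ⟨HasWalkIn.hasWalk, fun ⟨f, h0, hm, hf⟩ => ⟨f, h0, hm, fun _ _ => trivial, hf⟩⟩

lemma hasWalkIn_zero (hx : x ∈ S) : D.HasWalkIn S 0 x x :=
  ⟨fun _ => x, rfl, rfl, fun _ _ => hx, fun _ h => absurd h (Nat.not_lt_zero _)⟩

lemma HasWalkIn.eq_of_length_zero (h : D.HasWalkIn S 0 x y) : x = y := by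
  obtain ⟨f, rfl, rfl, -, -⟩ := h
  rfl

lemma hasWalkIn_one (hx : x ∈ S) (hy : y ∈ S) (h : D.Adj x y) : D.HasWalkIn S 1 x y := by
  refine ⟨fun t => if t = 0 then x else y, rfl, rfl, fun t _ => ?_, fun t ht => ?_⟩
  · dsimp only
    split_ifs <;> assumption
  · obtain rfl : t = 0 := by omega
    simpa using h

lemma hasWalk_one (h : D.Adj x y) : D.HasWalk 1 x y :=
  (hasWalkIn_one (S := univ) trivial trivial h).hasWalk

lemma HasWalkIn.trans (h₁ : D.HasWalkIn S m x y) (h₂ : D.HasWalkIn S n y z) :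
    D.HasWalkIn S (m + n) x z := by
  obtain ⟨f, rfl, rfl, hfS, hfA⟩ := h₁
  obtain ⟨g, hg0, rfl, hgS, hgA⟩ := h₂
  refine ⟨fun t => if t ≤ m then f t else g (t - m), by simp, ?_, fun t ht => ?_,
    fun t ht => ?_⟩
  · rcases n.eq_zero_or_pos with rfl | hn
    · simp [hg0]
    · simp [show ¬ m + n ≤ m by omega]
  · dsimp only
    split_ifs with htm
    · exact hfS t htm
    · exact hgS _ (by omega)
  · dsimp only
    rcases lt_trichotomy t m with h | rfl | h
    · rw [if_pos h.le, if_pos (show t + 1 ≤ m by omega)]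
      exact hfA t h
    · rw [if_pos le_rfl, if_neg (by omega), Nat.add_sub_cancel_left, ← hg0]
      exact hgA 0 (by omega)
    · rw [if_neg (by omega), if_neg (by omega), show t + 1 - m = t - m + 1 by omega]
      exact hgA _ (by omega)

lemma HasWalk.trans (h₁ : D.HasWalk m x y) (h₂ : D.HasWalk n y z) : D.HasWalk (m + n) x z :=
  hasWalkIn_univ_iff.mp ((hasWalkIn_univ_iff.mpr h₁).trans (hasWalkIn_univ_iff.mpr h₂))

lemma HasWalk.hasWalkIn_of_adj_mem (hS : ∀ a ∈ S, ∀ b, D.Adj a b → b ∈ S) (hx : x ∈ S)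
    (h : D.HasWalk m x y) : D.HasWalkIn S m x y := by
  obtain ⟨f, rfl, rfl, hA⟩ := h
  refine ⟨f, rfl, rfl, fun t ht => ?_, hA⟩
  induction t with
  | zero => exact hx
  | succ t ih => exact hS _ (ih (by omega)) _ (hA t (by omega))

namespace IsImprimLabelling

variable {u : V → ZMod κ}

lemma mono {T : Set V} (hu : D.IsImprimLabelling T u) (h : S ⊆ T) : D.IsImprimLabelling S u :=
  fun x hx y hy hxy => hu x (h hx) y (h hy) hxy

lemma apply_eq_add (hu : D.IsImprimLabelling S u) (h : D.HasWalkIn S m x y) :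
    u y = u x + m := by
  obtain ⟨f, rfl, rfl, hS, hA⟩ := h
  suffices ∀ t ≤ m, u (f t) = u (f 0) + t from this m le_rfl
  intro t ht
  induction t with
  | zero => simp
  | succ t ih =>
    rw [hu _ (hS t (by omega)) _ (hS _ ht) (hA t ht), ih (by omega)]
    push_cast
    ring

lemma eq_of_compGraph_adj (hu : D.IsImprimLabelling S u)
    (hS : ∀ a ∈ S, ∀ b, D.Adj a b → b ∈ S) (hx : x ∈ S) (hy : y ∈ S)
    (h : (D.compGraph m).Adj x y) : u x = u y := by
  obtain ⟨-, z, hxz, hyz⟩ := h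
  exact add_right_cancel ((hu.apply_eq_add (hxz.hasWalkIn_of_adj_mem hS hx)).symm.trans
    (hu.apply_eq_add (hyz.hasWalkIn_of_adj_mem hS hy)))

lemma cast_sub_eq {φ : V → ZMod n} (hu : D.IsImprimLabelling S u)
    (hφ : D.IsImprimLabelling S φ) (hS : D.IsStronglyConnectedOn S) (h : n ∣ κ) (hx : x ∈ S)
    (hy : y ∈ S) : ZMod.castHom h _ (u x) - φ x = ZMod.castHom h _ (u y) - φ y := by
  obtain ⟨m, hm⟩ := hS x hx y hy
  rw [hu.apply_eq_add hm, hφ.apply_eq_add hm, map_add, map_natCast]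
  ring

end IsImprimLabelling

namespace IsStronglyConnectedOn

lemma exists_adj (hS : D.IsStronglyConnectedOn S) (hnt : S.Nontrivial) (hx : x ∈ S) :
    ∃ y ∈ S, D.Adj x y := by
  obtain ⟨y, hy, hyx⟩ := hnt.exists_ne x
  obtain ⟨m, f, rfl, rfl, hfS, hfA⟩ := hS _ hx y hy
  rcases m.eq_zero_or_pos with rfl | hm
  · exact absurd rfl hyx
  · exact ⟨f 1, hfS 1 hm, hfA 0 hm⟩

lemma exists_hasWalkIn (hS : D.IsStronglyConnectedOn S) (hnt : S.Nontrivial) (hx : x ∈ S) :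
    ∀ m, ∃ w ∈ S, D.HasWalkIn S m x w := by
  intro m
  induction m with
  | zero => exact ⟨x, hx, hasWalkIn_zero hx⟩
  | succ m ih =>
    obtain ⟨y, hy, hxy⟩ := ih
    obtain ⟨z, hz, hyz⟩ := hS.exists_adj hnt hy
    exact ⟨z, hz, hxy.trans (hasWalkIn_one hy hz hyz)⟩

lemma exists_label_eq [NeZero κ] {u : V → ZMod κ} (hS : D.IsStronglyConnectedOn S)
    (hnt : S.Nontrivial) (hu : D.IsImprimLabelling S u) (c : ZMod κ) : ∃ z ∈ S, u z = c := by
  obtain ⟨x, hx⟩ := hnt.nonempty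
  obtain ⟨z, hz, hxz⟩ := hS.exists_hasWalkIn hnt hx (c - u x).val
  exact ⟨z, hz, by rw [hu.apply_eq_add hxz, ZMod.natCast_zmod_val]; ring⟩

end IsStronglyConnectedOn

def closedWalkLengths (D : Digraph' V) (hx : x ∈ S) : AddSubmonoid ℕ where
  carrier := {m | D.HasWalkIn S m x x}
  zero_mem' := hasWalkIn_zero hx
  add_mem' := HasWalkIn.trans

namespace IsImprimIndex

lemma pos (hκ : D.IsImprimIndex S κ) (hS : D.IsStronglyConnectedOn S) (hnt : S.Nontrivial) :
    0 < κ := by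
  obtain ⟨x, hx, y, hy, hxy⟩ := hnt
  obtain ⟨p, hp⟩ := hS x hx y hy
  obtain ⟨q, hq⟩ := hS y hy x hx
  have hp0 : 0 < p := Nat.pos_of_ne_zero fun h => hxy (h ▸ hp).eq_of_length_zero
  exact Nat.pos_of_dvd_of_pos (hκ.1 x _ hx (by omega) (hp.trans hq)) (by omega)

lemma dvd_of_isImprimLabelling {φ : V → ZMod n} (hκ : D.IsImprimIndex S κ)
    (hφ : D.IsImprimLabelling S φ) : n ∣ κ :=
  hκ.2 n fun x ℓ _ _ hℓ => (ZMod.natCast_eq_zero_iff ℓ n).mp <| by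
    simpa using hφ.apply_eq_add hℓ

lemma setGcd_closedWalkLengths_dvd (hκ : D.IsImprimIndex S κ) (hS : D.IsStronglyConnectedOn S)
    (hx : x ∈ S) : Nat.setGcd (D.closedWalkLengths hx : Set ℕ) ∣ κ := by
  refine hκ.2 _ fun y ℓ hy _ hℓ => ?_
  obtain ⟨p, hp⟩ := hS x hx y hy
  obtain ⟨q, hq⟩ := hS y hy x hx
  have h₁ := Nat.setGcd_dvd_of_mem (s := (D.closedWalkLengths hx : Set ℕ)) (hp.trans hq)
  have h₂ := Nat.setGcd_dvd_of_mem (s := (D.closedWalkLengths hx : Set ℕ))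
    ((hp.trans hℓ).trans hq)
  rw [add_right_comm] at h₂
  exact (Nat.dvd_add_right h₁).mp h₂

lemma eventually_hasWalkIn_of_mem {u : V → ZMod κ} (hκ : D.IsImprimIndex S κ)
    (hS : D.IsStronglyConnectedOn S) (hu : D.IsImprimLabelling S u) (hx : x ∈ S) (hy : y ∈ S) :
    ∀ᶠ m : ℕ in atTop, (m : ZMod κ) = u y - u x → D.HasWalkIn S m x y := by
  obtain ⟨p, hp⟩ := hS x hx y hy
  obtain ⟨c₀, hc₀⟩ := Nat.exists_mem_closure_of_ge (D.closedWalkLengths hy : Set ℕ)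
  rw [AddSubmonoid.closure_eq] at hc₀
  filter_upwards [eventually_ge_atTop (p + c₀)] with m hm hmod
  have hdvd : κ ∣ m - p := by
    rw [← ZMod.natCast_eq_zero_iff, Nat.cast_sub (by omega), hmod, hu.apply_eq_add hp]
    ring
  have hc : D.HasWalkIn S (m - p) y y :=
    hc₀ (m - p) (by omega) ((hκ.setGcd_closedWalkLengths_dvd hS hy).trans hdvd)
  simpa [Nat.add_sub_cancel' (show p ≤ m by omega)] using hp.trans hc

lemma eventually_hasWalkIn [Finite V] {u : V → ZMod κ} (hκ : D.IsImprimIndex S κ)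
    (hS : D.IsStronglyConnectedOn S) (hu : D.IsImprimLabelling S u) :
    ∀ᶠ m : ℕ in atTop, ∀ x ∈ S, ∀ y ∈ S, (m : ZMod κ) = u y - u x → D.HasWalkIn S m x y := by
  simp only [eventually_all]
  exact fun x hx y hy => hκ.eventually_hasWalkIn_of_mem hS hu hx hy

end IsImprimIndex

namespace CompConvergesTo

variable {G : SimpleGraph V}

lemma eventually_eq (hG : D.CompConvergesTo G) : ∀ᶠ m in atTop, D.compGraph m = G :=
  let ⟨N, _, hN⟩ := hG
  eventually_atTop.2 ⟨N, hN⟩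

lemma exists_compGraph_adj (hG : D.CompConvergesTo G) (h : G.Adj x y) :
    ∃ m, (D.compGraph m).Adj x y :=
  let ⟨m, hm⟩ := hG.eventually_eq.exists
  ⟨m, hm ▸ h⟩

lemma adj_of_eventually (hG : D.CompConvergesTo G) (hxy : x ≠ y)
    (h : ∀ᶠ m in atTop, ∃ z, D.HasWalk m x z ∧ D.HasWalk m y z) : G.Adj x y :=
  let ⟨_, hm, hz⟩ := (hG.eventually_eq.and h).exists
  hm ▸ ⟨hxy, hz⟩

lemma eq_of_reachable {φ : V → ZMod n} (hG : D.CompConvergesTo G)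
    (hφ : D.IsImprimLabelling univ φ) (h : G.Reachable x y) : φ x = φ y := by
  rw [SimpleGraph.reachable_iff_reflTransGen] at h
  induction h with
  | refl => rfl
  | tail _ hab ih =>
    obtain ⟨_, hm⟩ := hG.exists_compGraph_adj hab
    exact ih.trans (hφ.eq_of_compGraph_adj (fun _ _ _ _ => trivial) trivial trivial hm)

end CompConvergesTo

namespace IsLinConn

variable {Vset : ℕ → Set V}

lemma nontrivial {i : ℕ} (hD : D.IsLinConn 2 Vset) (hi₁ : 1 ≤ i) (hi₂ : i ≤ 2)
    (h : ¬ IsTrivialComp (Vset i)) : (Vset i).Nontrivial :=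
  (hD.nonempty i hi₁ hi₂).exists_eq_singleton_or_nontrivial.resolve_left h

lemma isStronglyConnectedOn {i : ℕ} (hD : D.IsLinConn 2 Vset) (hi₁ : 1 ≤ i) (hi₂ : i ≤ 2) :
    D.IsStronglyConnectedOn (Vset i) :=
  hD.strong i hi₁ hi₂

lemma mem_one_or_mem_two (hD : D.IsLinConn 2 Vset) (v : V) : v ∈ Vset 1 ∨ v ∈ Vset 2 := by
  obtain ⟨i, hi₁, hi₂, hv⟩ := hD.cover v
  interval_cases i <;> simp [hv]

lemma notMem_two_of_mem_one (hD : D.IsLinConn 2 Vset) (hx : x ∈ Vset 1) : x ∉ Vset 2 :=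
  fun hx₂ => absurd (hD.disjoint' 1 2 le_rfl one_le_two one_le_two le_rfl x hx hx₂) (by norm_num)

lemma adj_cases (hD : D.IsLinConn 2 Vset) (h : D.Adj x y) :
    (x ∈ Vset 1 ∧ y ∈ Vset 1) ∨ (x ∈ Vset 2 ∧ y ∈ Vset 2) ∨ (x ∈ Vset 1 ∧ y ∈ Vset 2) := by
  obtain ⟨i, hi, ⟨hi₂, hx, hy⟩ | ⟨hi₂, hx, hy⟩⟩ := hD.arcs x y h
  · interval_cases i <;> simp [hx, hy]
  · obtain rfl : i = 1 := by omega
    exact Or.inr (Or.inr ⟨hx, hy⟩)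

lemma mem_two_of_adj (hD : D.IsLinConn 2 Vset) (hx : x ∈ Vset 2) (h : D.Adj x y) :
    y ∈ Vset 2 := by
  rcases hD.adj_cases h with ⟨hx₁, -⟩ | ⟨-, hy⟩ | ⟨hx₁, -⟩
  · exact absurd hx (hD.notMem_two_of_mem_one hx₁)
  · exact hy
  · exact absurd hx (hD.notMem_two_of_mem_one hx₁)

lemma exists_hasWalk_mem_two (hD : D.IsLinConn 2 Vset) (x : V) :
    ∃ s, ∃ q ∈ Vset 2, D.HasWalk s x q := by
  rcases hD.mem_one_or_mem_two x with hx | hx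
  · obtain ⟨a, ha, b, hb, hab⟩ := hD.linked 1 le_rfl le_rfl
    obtain ⟨s, hs⟩ := hD.strong 1 le_rfl one_le_two x hx a ha
    exact ⟨s + 1, b, hb, hs.hasWalk.trans (hasWalk_one hab)⟩
  · exact ⟨0, x, hx, (hasWalkIn_zero hx).hasWalk⟩

variable {G : SimpleGraph V} {κ₂ s : ℕ} {u₂ : V → ZMod κ₂} {q : V}

lemma eventually_hasWalk_mem_two [Finite V] (hD : D.IsLinConn 2 Vset)
    (hκ₂ : D.IsImprimIndex (Vset 2) κ₂) (hu₂ : D.IsImprimLabelling (Vset 2) u₂)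
    (hq : q ∈ Vset 2) (h : D.HasWalk s x q) :
    ∀ᶠ m : ℕ in atTop, ∀ w ∈ Vset 2, u₂ w + s = u₂ q + m → D.HasWalk m x w := by
  filter_upwards [eventually_ge_atTop s, (tendsto_sub_atTop_nat s).eventually
      (hκ₂.eventually_hasWalkIn (hD.isStronglyConnectedOn one_le_two le_rfl) hu₂)]
    with m hm hwalk w hw hwq
  have := h.trans (hwalk q hq w hw (by rw [Nat.cast_sub hm]; linear_combination -hwq)).hasWalk
  rwa [Nat.add_sub_cancel' hm] at this

lemma adj_of_hasWalk [Finite V] [NeZero κ₂] (hD : D.IsLinConn 2 Vset)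
    (hnt : (Vset 2).Nontrivial) (hκ₂ : D.IsImprimIndex (Vset 2) κ₂)
    (hu₂ : D.IsImprimLabelling (Vset 2) u₂) (hG : D.CompConvergesTo G) (hx : x ∉ Vset 2)
    (hq : q ∈ Vset 2) (h : D.HasWalk s x q) (hz : z ∈ Vset 2) (hzq : u₂ q = u₂ z + s) :
    G.Adj x z := by
  have hS₂ := hD.isStronglyConnectedOn one_le_two le_rfl
  refine hG.adj_of_eventually (fun hxz => hx (hxz ▸ hz)) ?_
  filter_upwards [hD.eventually_hasWalk_mem_two hκ₂ hu₂ hq h,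
    hκ₂.eventually_hasWalkIn hS₂ hu₂] with m hxw hzw
  obtain ⟨w, hw, hwu⟩ := hS₂.exists_label_eq hnt hu₂ (u₂ z + m)
  exact ⟨w, hxw w hw (by rw [hwu, hzq]; ring), (hzw z hz w hw (by rw [hwu]; ring)).hasWalk⟩

lemma eq_of_adj (hD : D.IsLinConn 2 Vset) (hu₂ : D.IsImprimLabelling (Vset 2) u₂)
    (hG : D.CompConvergesTo G) (hx : x ∈ Vset 2) (hy : y ∈ Vset 2) (h : G.Adj x y) :
    u₂ x = u₂ y :=
  let ⟨_, hm⟩ := hG.exists_compGraph_adj h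
  hu₂.eq_of_compGraph_adj (fun _ ha _ => hD.mem_two_of_adj ha) hx hy hm

lemma sub_eq_sub_of_complete [Finite V] [NeZero κ₂] (hD : D.IsLinConn 2 Vset)
    (hnt : (Vset 2).Nontrivial) (hκ₂ : D.IsImprimIndex (Vset 2) κ₂)
    (hu₂ : D.IsImprimLabelling (Vset 2) u₂) (hG : D.CompConvergesTo G)
    (hcomp : ∀ x y, x ≠ y → G.Reachable x y → G.Adj x y) {s' : ℕ} {q' : V}
    (hq : q ∈ Vset 2) (hq' : q' ∈ Vset 2) (h : D.HasWalk s x q) (h' : D.HasWalk s' x q') :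
    u₂ q - s = u₂ q' - s' := by
  by_cases hx : x ∈ Vset 2
  · have hS : ∀ a ∈ Vset 2, ∀ b, D.Adj a b → b ∈ Vset 2 := fun _ ha _ => hD.mem_two_of_adj ha
    rw [hu₂.apply_eq_add (h.hasWalkIn_of_adj_mem hS hx),
      hu₂.apply_eq_add (h'.hasWalkIn_of_adj_mem hS hx)]
    ring
  have hS₂ := hD.isStronglyConnectedOn one_le_two le_rfl
  obtain ⟨z, hz, hzu⟩ := hS₂.exists_label_eq hnt hu₂ (u₂ q - s)
  obtain ⟨z', hz', hzu'⟩ := hS₂.exists_label_eq hnt hu₂ (u₂ q' - s')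
  have hxz := hD.adj_of_hasWalk hnt hκ₂ hu₂ hG hx hq h hz (by rw [hzu]; ring)
  have hxz' := hD.adj_of_hasWalk hnt hκ₂ hu₂ hG hx hq' h' hz' (by rw [hzu']; ring)
  rw [← hzu, ← hzu']
  rcases eq_or_ne z z' with rfl | hne
  · rfl
  · exact hD.eq_of_adj hu₂ hG hz hz'
      (hcomp z z' hne (hxz.symm.reachable.trans hxz'.reachable))

lemma exists_labelling_of_complete [Finite V] [NeZero κ₂] (hD : D.IsLinConn 2 Vset)
    (hnt : (Vset 2).Nontrivial) (hκ₂ : D.IsImprimIndex (Vset 2) κ₂)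
    (hu₂ : D.IsImprimLabelling (Vset 2) u₂) (hG : D.CompConvergesTo G)
    (hcomp : ∀ x y, x ≠ y → G.Reachable x y → G.Adj x y) :
    ∃ φ : V → ZMod κ₂, D.IsImprimLabelling univ φ ∧ EqOn φ u₂ (Vset 2) := by
  choose s q hq h using hD.exists_hasWalk_mem_two
  have key {x s' q'} (hq' : q' ∈ Vset 2) (h' : D.HasWalk s' x q') :
      u₂ (q x) - s x = u₂ q' - s' :=
    hD.sub_eq_sub_of_complete hnt hκ₂ hu₂ hG hcomp (hq x) hq' (h x) h'
  refine ⟨fun x => u₂ (q x) - s x, fun x _ y _ hxy => ?_, fun x hx => ?_⟩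
  · show u₂ (q y) - s y = u₂ (q x) - s x + 1
    rw [key (hq y) ((hasWalk_one hxy).trans (h y))]
    push_cast
    ring
  · show u₂ (q x) - s x = u₂ x
    rw [key hx (hasWalkIn_zero hx).hasWalk]
    simp

lemma complete_of_labelling [Finite V] [NeZero κ₂] (hD : D.IsLinConn 2 Vset)
    (hnt : (Vset 2).Nontrivial) (hκ₂ : D.IsImprimIndex (Vset 2) κ₂)
    (hu₂ : D.IsImprimLabelling (Vset 2) u₂) (hG : D.CompConvergesTo G) {φ : V → ZMod κ₂}
    (hφ : D.IsImprimLabelling univ φ) (hφu : EqOn φ u₂ (Vset 2)) (hxy : x ≠ y)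
    (h : G.Reachable x y) : G.Adj x y := by
  have reach (v : V) : ∀ᶠ m : ℕ in atTop, ∀ w ∈ Vset 2, u₂ w = φ v + m → D.HasWalk m v w := by
    obtain ⟨s, q, hq, h⟩ := hD.exists_hasWalk_mem_two v
    filter_upwards [hD.eventually_hasWalk_mem_two hκ₂ hu₂ hq h] with m hm w hw hwu
    refine hm w hw ?_
    rw [hwu, ← hφu hq, hφ.apply_eq_add (hasWalkIn_univ_iff.mpr h)]
    ring
  refine hG.adj_of_eventually hxy ?_
  filter_upwards [reach x, reach y] with m hx hy
  obtain ⟨w, hw, hwu⟩ :=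
    (hD.isStronglyConnectedOn one_le_two le_rfl).exists_label_eq hnt hu₂ (φ x + m)
  exact ⟨w, hx w hw hwu, hy w hw (by rw [hwu, hG.eq_of_reachable hφ h])⟩

lemma complete_iff_exists_labelling [Finite V] [NeZero κ₂] (hD : D.IsLinConn 2 Vset)
    (hnt : (Vset 2).Nontrivial) (hκ₂ : D.IsImprimIndex (Vset 2) κ₂)
    (hu₂ : D.IsImprimLabelling (Vset 2) u₂) (hG : D.CompConvergesTo G) :
    (∀ x y, x ≠ y → G.Reachable x y → G.Adj x y) ↔
      ∃ φ : V → ZMod κ₂, D.IsImprimLabelling univ φ ∧ EqOn φ u₂ (Vset 2) :=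
  ⟨hD.exists_labelling_of_complete hnt hκ₂ hu₂ hG, fun ⟨_, hφ, hφu⟩ _ _ =>
    hD.complete_of_labelling hnt hκ₂ hu₂ hG hφ hφu⟩

lemma exists_labelling_iff {κ : ℕ → ℕ} {u : ∀ i : ℕ, V → ZMod (κ i)} [NeZero (κ 1)]
    (hD : D.IsLinConn 2 Vset) (hκ₁ : D.IsImprimIndex (Vset 1) (κ 1))
    (hu₁ : D.IsImprimLabelling (Vset 1) (u 1)) (hu₂ : D.IsImprimLabelling (Vset 2) (u 2)) :
    (∃ φ : V → ZMod (κ 2), D.IsImprimLabelling univ φ ∧ EqOn φ (u 2) (Vset 2)) ↔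
    (κ 2 ∣ κ 1 ∧
      ∀ (i : ZMod (κ 1)) (j : ZMod (κ 2)) (i' : ZMod (κ 1)) (j' : ZMod (κ 2)),
        InI D Vset u 1 i j → InI D Vset u 1 i' j' →
        (i.val : ZMod (κ 2)) - j = (i'.val : ZMod (κ 2)) - j') := by
  have hval (h : κ 2 ∣ κ 1) (i : ZMod (κ 1)) : (i.val : ZMod (κ 2)) = ZMod.castHom h _ i := by
    rw [ZMod.natCast_val, ZMod.castHom_apply]
  constructor
  · rintro ⟨φ, hφ, hφu⟩
    have hdvd : κ 2 ∣ κ 1 := hκ₁.dvd_of_isImprimLabelling (hφ.mono (subset_univ _))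
    refine ⟨hdvd, ?_⟩
    rintro - j - j' ⟨p, hp, q, hq, hpq, rfl, hj⟩ ⟨p', hp', q', hq', hpq', rfl, hj'⟩
    obtain rfl : j = φ q := hj.symm.trans (hφu hq).symm
    obtain rfl : j' = φ q' := hj'.symm.trans (hφu hq').symm
    rw [hval hdvd, hval hdvd, hφ _ trivial _ trivial hpq, hφ _ trivial _ trivial hpq']
    linear_combination hu₁.cast_sub_eq (hφ.mono (subset_univ _))
      (hD.isStronglyConnectedOn le_rfl one_le_two) hdvd hp hp'
  · rintro ⟨hdvd, hconst⟩
    obtain ⟨a, ha, b, hb, hab⟩ := hD.linked 1 le_rfl le_rfl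
    set red := ZMod.castHom hdvd (ZMod (κ 2))
    set δ := red (u 1 a) - u 2 b
    have hI {p q : V} (hp : p ∈ Vset 1) (hq : q ∈ Vset 2) (hpq : D.Adj p q) :
        u 2 q = red (u 1 p) - δ := by
      have := hconst _ _ _ _ ⟨p, hp, q, hq, hpq, rfl, rfl⟩ ⟨a, ha, b, hb, hab, rfl, rfl⟩
      rw [hval hdvd, hval hdvd] at this
      linear_combination -this
    classical
    refine ⟨fun v => if v ∈ Vset 2 then u 2 v else red (u 1 v) - δ - 1, fun x _ y _ hxy => ?_,
      fun v hv => if_pos hv⟩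
    rcases hD.adj_cases hxy with ⟨hx, hy⟩ | ⟨hx, hy⟩ | ⟨hx, hy⟩
    · simp only [if_neg (hD.notMem_two_of_mem_one hx), if_neg (hD.notMem_two_of_mem_one hy),
        hu₁ x hx y hy hxy, map_add, map_one]
      ring
    · simp only [if_pos hx, if_pos hy]
      exact hu₂ x hx y hy hxy
    · simp only [if_neg (hD.notMem_two_of_mem_one hx), if_pos hy, hI hx hy hxy]
      ring

end IsLinConn

end Digraph'

open Digraph' in
/-- for two nontrivial strong components, the limit of `{C(D^m)}` has
only complete connected components iff `κ₂ ∣ κ₁` and `red(i) − j` is constant over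
`I(D_{1,2})` mod `κ₂`. -/
theorem stmt15 {V : Type*} [Fintype V] (D : Digraph' V) (Vset : ℕ → Set V)
    (hD : D.IsLinConn 2 Vset)
    (h1 : ¬ IsTrivialComp (Vset 1)) (h2 : ¬ IsTrivialComp (Vset 2))
    (κ : ℕ → ℕ) (u : ∀ i : ℕ, V → ZMod (κ i))
    (hκ : ∀ i, 1 ≤ i → i ≤ 2 → IsImprimIndex D (Vset i) (κ i))
    (hu : ∀ i, 1 ≤ i → i ≤ 2 → IsImprimLabelling D (Vset i) (u i))
    (G : SimpleGraph V) (hG : D.CompConvergesTo G) :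
    (∀ x y : V, x ≠ y → G.Reachable x y → G.Adj x y) ↔
    (κ 2 ∣ κ 1 ∧
      ∀ (i : ZMod (κ 1)) (j : ZMod (κ 2)) (i' : ZMod (κ 1)) (j' : ZMod (κ 2)),
        InI D Vset u 1 i j → InI D Vset u 1 i' j' →
        (i.val : ZMod (κ 2)) - j = (i'.val : ZMod (κ 2)) - j') := by
  have hnt₁ := hD.nontrivial le_rfl one_le_two h1
  have hnt₂ := hD.nontrivial one_le_two le_rfl h2
  have : NeZero (κ 1) := ⟨((hκ 1 le_rfl one_le_two).pos
    (hD.isStronglyConnectedOn le_rfl one_le_two) hnt₁).ne'⟩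
  have : NeZero (κ 2) := ⟨((hκ 2 one_le_two le_rfl).pos
    (hD.isStronglyConnectedOn one_le_two le_rfl) hnt₂).ne'⟩
  rw [hD.complete_iff_exists_labelling hnt₂ (hκ 2 one_le_two le_rfl) (hu 2 one_le_two le_rfl) hG,
    hD.exists_labelling_iff (hκ 1 le_rfl one_le_two) (hu 1 le_rfl one_le_two)
      (hu 2 one_le_two le_rfl)]
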